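/- arXiv:1309.7796 — 4 statements merged into one kernel-verified Lean document; each statement's English description precedes it below -/
import Mathlib

section
/- Let n ≥ 2 be an integer. The function ξ ↦ (sin ξ)^{n−1} / ∫_0^ξ (sin t)^{n−1} dt is strictly decreasing on the interval (0, π/2]. -/
/-!
Write `F ξ = ∫₀^ξ sin^m` with `m = n - 1`. By the quotient rule the sign of the derivative of
`sin^m / F` is that of `m sin^(m-1) cos · F - sin^(2m)`, so it suffices that
`m cos ξ · F ξ < sin^(m+1) ξ` for `0 < ξ < π`. Since `cos` decreases on `[0, π]`,
`cos ξ · F ξ ≤ ∫₀^ξ cos t sin^m t dt = sin^(m+1) ξ / (m+1)`, which gives the inequality.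
-/

open Real Set intervalIntegral

namespace Real

theorem integral_sin_pow_pos_of_mem_Ioc (m : ℕ) {x : ℝ} (hx : x ∈ Ioc 0 π) :
    0 < ∫ t in (0 : ℝ)..x, sin t ^ m :=
  intervalIntegral_pos_of_pos_on ((continuous_sin.pow m).intervalIntegrable 0 x)
    (fun _ ht => pow_pos (sin_pos_of_pos_of_lt_pi ht.1 (ht.2.trans_le hx.2)) m) hx.1

theorem integral_sin_pow_mul_cos (m : ℕ) (x : ℝ) :
    ∫ t in (0 : ℝ)..x, sin t ^ m * cos t = sin x ^ (m + 1) / (m + 1) := by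
  simpa using integral_sin_pow_mul_cos_pow_odd (a := 0) (b := x) m 0

theorem mul_cos_mul_integral_sin_pow_lt (m : ℕ) {x : ℝ} (hx : x ∈ Ioo 0 π) :
    m * cos x * ∫ t in (0 : ℝ)..x, sin t ^ m < sin x ^ (m + 1) := by
  have hsin : 0 < sin x ^ (m + 1) := pow_pos (sin_pos_of_pos_of_lt_pi hx.1 hx.2) _
  have hcos_le : cos x * ∫ t in (0 : ℝ)..x, sin t ^ m ≤ sin x ^ (m + 1) / (m + 1) := by
    rw [← integral_const_mul, ← integral_sin_pow_mul_cos]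
    refine integral_mono_on hx.1.le ((by fun_prop : Continuous _).intervalIntegrable _ _)
      ((by fun_prop : Continuous _).intervalIntegrable _ _) fun t ht => ?_
    rw [mul_comm]
    exact mul_le_mul_of_nonneg_left
      (cos_le_cos_of_nonneg_of_le_pi ht.1 hx.2.le ht.2)
      (pow_nonneg (sin_nonneg_of_nonneg_of_le_pi ht.1 (ht.2.trans hx.2.le)) m)
  calc (m : ℝ) * cos x * ∫ t in (0 : ℝ)..x, sin t ^ m
      ≤ m * (sin x ^ (m + 1) / (m + 1)) := by
        rw [mul_assoc]; exact mul_le_mul_of_nonneg_left hcos_le m.cast_nonneg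
    _ < sin x ^ (m + 1) := by
        rw [mul_div_assoc', div_lt_iff₀ (by positivity)]; linarith

theorem mul_sin_pow_pred_mul_cos_mul_integral_lt (m : ℕ) {x : ℝ} (hx : x ∈ Ioo 0 π) :
    m * sin x ^ (m - 1) * cos x * (∫ t in (0 : ℝ)..x, sin t ^ m) < sin x ^ m * sin x ^ m := by
  cases m with
  | zero => simp
  | succ k =>
    have key := mul_lt_mul_of_pos_left (mul_cos_mul_integral_sin_pow_lt (k + 1) hx)
      (pow_pos (sin_pos_of_pos_of_lt_pi hx.1 hx.2) k)
    rw [Nat.add_sub_cancel]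
    exact lt_of_eq_of_lt (by ring) (key.trans_eq (by ring))

theorem strictAntiOn_sin_pow_div_integral (m : ℕ) :
    StrictAntiOn (fun ξ => sin ξ ^ m / ∫ t in (0 : ℝ)..ξ, sin t ^ m) (Ioc 0 π) := by
  have hF : ∀ x, HasDerivAt (fun ξ => ∫ t in (0 : ℝ)..ξ, sin t ^ m) (sin x ^ m) x := fun x =>
    ((continuous_sin.pow m).integral_hasStrictDerivAt 0 x).hasDerivAt
  refine strictAntiOn_of_deriv_neg (convex_Ioc 0 π) (fun x hx => ?_) fun x hx => ?_
  · exact ((continuous_sin.pow m).continuousAt.div (hF x).continuousAt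
      (integral_sin_pow_pos_of_mem_Ioc m hx).ne').continuousWithinAt
  · rw [interior_Ioc] at hx
    have hFx := integral_sin_pow_pos_of_mem_Ioc m (Ioo_subset_Ioc_self hx)
    rw [(((hasDerivAt_sin x).fun_pow m).fun_div (hF x) hFx.ne').deriv]
    exact div_neg_of_neg_of_pos
      (sub_neg.2 (mul_sin_pow_pred_mul_cos_mul_integral_lt m hx)) (pow_pos hFx 2)

end Real

theorem stmt_9_general (n : ℕ) :
    StrictAntiOn (fun ξ : ℝ => Real.sin ξ ^ (n - 1) / ∫ t in (0:ℝ)..ξ, Real.sin t ^ (n - 1))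
      (Set.Ioc 0 (Real.pi / 2)) :=
  (strictAntiOn_sin_pow_div_integral (n - 1)).mono
    (Ioc_subset_Ioc_right (by linarith [pi_pos]))

/-- For `n ≥ 2`, the function `ξ ↦ (sin ξ)^{n−1} / ∫_0^ξ (sin t)^{n−1} dt` is strictly
decreasing on `(0, π/2]`. -/
theorem stmt_9 (n : ℕ) (hn : 2 ≤ n) :
    StrictAntiOn (fun ξ : ℝ => Real.sin ξ ^ (n - 1) / ∫ t in (0:ℝ)..ξ, Real.sin t ^ (n - 1))
      (Set.Ioc 0 (Real.pi / 2)) :=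
  stmt_9_general n
end

section
/- Let λ, δ > 0 and set η = (1/λ)·arctan(λ/δ). Then for every s with 0 ≤ s ≤ η, one has sin(λs) ≤ sin(λη)·e^{δ(s−η)}. -/
/-!
After the substitution `x = λs`, the claim says that `x ↦ sin x · e^{-x/c}`, with `c = λ/δ`, is
monotone on `[0, arctan c]`. Its derivative is `e^{-x/c} (cos x - sin x / c)`, which is
nonnegative exactly while `tan x ≤ c`, i.e. up to `x = arctan c`.
-/

open Real Set

theorem Real.sin_le_mul_cos_of_le_arctan {c x : ℝ} (hx₀ : -(π / 2) < x) (hx : x ≤ arctan c) :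
    sin x ≤ c * cos x := by
  have hx₁ : x < π / 2 := hx.trans_lt (arctan_lt_pi_div_two c)
  have hcos : 0 < cos x := cos_pos_of_mem_Ioo ⟨hx₀, hx₁⟩
  have htan : tan x ≤ c := by
    rwa [← arctan_tan hx₀ hx₁, arctan_strictMono.le_iff_le] at hx
  calc sin x = tan x * cos x := by rw [tan_eq_sin_div_cos, div_mul_cancel₀ _ hcos.ne']
    _ ≤ c * cos x := mul_le_mul_of_nonneg_right htan hcos.le

theorem Real.monotoneOn_sin_mul_exp_neg_div {c : ℝ} (hc : 0 < c) :
    MonotoneOn (fun x ↦ sin x * exp (-(x / c))) (Ioc (-(π / 2)) (arctan c)) := by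
  have hderiv (x : ℝ) : HasDerivAt (fun x ↦ sin x * exp (-(x / c)))
      (exp (-(x / c)) * (cos x - sin x / c)) x := by
    have hexp : HasDerivAt (fun x ↦ exp (-(x / c))) (exp (-(x / c)) * -(1 / c)) x :=
      ((hasDerivAt_id' x).div_const c).neg.exp
    exact ((hasDerivAt_sin x).mul hexp).congr_deriv (by ring)
  refine monotoneOn_of_hasDerivWithinAt_nonneg (convex_Ioc _ _) (by fun_prop)
    (fun x _ ↦ (hderiv x).hasDerivWithinAt) fun x hx ↦ ?_
  rw [interior_Ioc] at hx
  have hsin : sin x / c ≤ cos x :=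
    (div_le_iff₀' hc).mpr (sin_le_mul_cos_of_le_arctan hx.1 hx.2.le)
  exact mul_nonneg (exp_pos _).le (sub_nonneg.mpr hsin)

/-- For `λ, δ > 0` and `η = (1/λ)·arctan(λ/δ)`, one has
`sin(λs) ≤ sin(λη)·e^{δ(s−η)}` for all `s ∈ [0, η]`. -/
theorem stmt_13 (l δ : ℝ) (hl : 0 < l) (hδ : 0 < δ)
    (η : ℝ) (hη : η = 1 / l * Real.arctan (l / δ)) :
    ∀ s : ℝ, 0 ≤ s → s ≤ η →
      Real.sin (l * s) ≤ Real.sin (l * η) * Real.exp (δ * (s - η)) := by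
  intro s hs₀ hsη
  have hlη : l * η = arctan (l / δ) := by rw [hη]; field_simp
  have hrescale (t : ℝ) : -(l * t / (l / δ)) = -(δ * t) := by field_simp
  have hmem (t : ℝ) (ht₀ : 0 ≤ t) (htη : t ≤ η) : l * t ∈ Ioc (-(π / 2)) (arctan (l / δ)) :=
    ⟨by nlinarith [pi_pos], hlη ▸ mul_le_mul_of_nonneg_left htη hl.le⟩
  have key := monotoneOn_sin_mul_exp_neg_div (div_pos hl hδ) (hmem s hs₀ hsη)
    (hmem η (hs₀.trans hsη) le_rfl) (mul_le_mul_of_nonneg_left hsη hl.le)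
  simp only [hrescale] at key
  calc sin (l * s) = sin (l * s) * exp (-(δ * s)) * exp (δ * s) := by
        rw [mul_assoc, ← exp_add, neg_add_cancel, exp_zero, mul_one]
    _ ≤ sin (l * η) * exp (-(δ * η)) * exp (δ * s) :=
        mul_le_mul_of_nonneg_right key (exp_pos _).le
    _ = sin (l * η) * exp (δ * (s - η)) := by rw [mul_assoc, ← exp_add]; ring_nf
end

section
/- Let n ≥ 2 be an integer and let δ, ε, R be positive reals with δ > 1/n and ε ≤ 1/(nδ). Set λ = (e^{δR}/ε)·√(1 − ε²δ²e^{−2δR}), η = (1/λ)·arctan(λ/δ), and define b : [0, R+η] → ℝ by b(t) = ε·e^{−δt} for t ∈ [0, R] and b(t) = ε·e^{−δR}·sin(λ(η+R−t))/sin(λη) for t ∈ [R, R+η]. Then for every r ∈ [0, R+η), b(r)^{n−1} ≥ (n−1)·δ·∫_r^{R+η} b(t)^{n−1} dt. -/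
/-!
Write `m = n - 1`. A nonnegative profile `b` whose right derivative satisfies `b' ≤ -δ b` obeys
`(b^m)' + m δ b^m = m b^(m-1) (b' + δ b) ≤ 0`, so integrating from `r` to `R + η` gives
`m δ ∫_r^{R+η} b^m ≤ b(r)^m - b(R+η)^m ≤ b(r)^m`. On `[0, R]` the profile `ε e^{-δt}` has
`b' = -δ b` exactly; on the cap `[R, R+η]` the condition reads `δ sin s ≤ l cos s` for
`s = l (R + η - t) ∈ [0, arctan (l / δ)]`, which is `tan s ≤ l / δ`.
-/

open Real Set intervalIntegral

theorem mul_sin_le_mul_cos_of_le_arctan {δ l x : ℝ} (hδ : 0 < δ) (hx₀ : 0 ≤ x)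
    (hx : x ≤ arctan (l / δ)) : δ * sin x ≤ l * cos x := by
  have hx' : x < π / 2 := hx.trans_lt (arctan_lt_pi_div_two _)
  have hcos : 0 < cos x := cos_pos_of_mem_Ioo ⟨by linarith [pi_pos], hx'⟩
  have htan : tan x ≤ l / δ := by
    rwa [← arctan_strictMono.le_iff_le, arctan_tan (by linarith [pi_pos]) hx']
  rw [tan_eq_sin_div_cos, div_le_div_iff₀ hcos hδ] at htan
  linarith

theorem mul_integral_pow_le_sub_pow_of_hasDerivWithinAt_le {f : ℝ → ℝ} {a b δ : ℝ} (m : ℕ)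
    (hab : a ≤ b) (hf : ContinuousOn f (Icc a b)) (hf_nonneg : ∀ t ∈ Ioo a b, 0 ≤ f t)
    (hdecay : ∀ t ∈ Ioo a b, ∃ d ≤ -δ * f t, HasDerivWithinAt f d (Ioi t) t) :
    m * δ * ∫ t in a..b, f t ^ m ≤ f a ^ m - f b ^ m := by
  have key := sub_le_integral_of_hasDeriv_right_of_le (g := fun t => f t ^ m)
    (g' := fun t => m * f t ^ (m - 1) * derivWithin f (Ioi t) t)
    (φ := fun t => -(m * δ * f t ^ m)) hab (hf.pow m) ?_ ?_ ?_
  · rw [integral_neg, integral_const_mul] at key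
    linarith
  · intro t ht
    obtain ⟨d, -, hd⟩ := hdecay t ht
    rw [hd.derivWithin (uniqueDiffWithinAt_Ioi t)]
    exact hd.pow m
  · exact ((hf.pow m).const_mul _).neg.integrableOn_Icc
  · intro t ht
    obtain ⟨d, hd_le, hd⟩ := hdecay t ht
    rw [hd.derivWithin (uniqueDiffWithinAt_Ioi t)]
    rcases m with _ | m
    · simp
    · have hft := hf_nonneg t ht
      calc ((m + 1 : ℕ) : ℝ) * f t ^ (m + 1 - 1) * d
          ≤ ((m + 1 : ℕ) : ℝ) * f t ^ m * (-δ * f t) := by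
            rw [Nat.add_sub_cancel]
            gcongr
        _ = -(((m + 1 : ℕ) : ℝ) * δ * f t ^ (m + 1)) := by ring

theorem hasDerivWithinAt_Ioi_of_eqOn_Icc {f g : ℝ → ℝ} {a c t d : ℝ} (hfg : EqOn f g (Icc a c))
    (ht : t ∈ Ico a c) (hg : HasDerivAt g d t) : HasDerivWithinAt f d (Ioi t) t :=
  hg.hasDerivWithinAt.congr_of_eventuallyEq
    (Filter.eventually_of_mem (Ioo_mem_nhdsGT ht.2) fun _ hs => hfg ⟨ht.1.trans hs.1.le, hs.2.le⟩)
    (hfg (Ico_subset_Icc_self ht))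

theorem exp_div_mul_sqrt_one_sub_pos {ε δ R : ℝ} (hε : 0 < ε) (hδ : 0 < δ) (hR : 0 ≤ R)
    (hεδ : ε * δ < 1) : 0 < exp (δ * R) / ε * √(1 - ε ^ 2 * δ ^ 2 * exp (-(2 * δ * R))) := by
  have hexp : exp (-(2 * δ * R)) ≤ 1 := exp_le_one_iff.2 (by nlinarith)
  have hsq : (ε * δ) ^ 2 < 1 := by nlinarith [mul_pos hε hδ]
  have : 0 < 1 - ε ^ 2 * δ ^ 2 * exp (-(2 * δ * R)) := by
    nlinarith [mul_le_mul_of_nonneg_left hexp (sq_nonneg (ε * δ))]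
  positivity

section Warping

variable {b : ℝ → ℝ} {δ ε R l η : ℝ}

theorem warping_continuousOn (hR : 0 ≤ R) (hη : 0 ≤ η)
    (hb₁ : EqOn b (fun t => ε * exp (-(δ * t))) (Icc 0 R))
    (hb₂ : EqOn b (fun t => ε * exp (-(δ * R)) * (sin (l * (η + R - t)) / sin (l * η)))
      (Icc R (R + η))) :
    ContinuousOn b (Icc 0 (R + η)) := by
  rw [← Icc_union_Icc_eq_Icc hR (le_add_of_nonneg_right hη)]
  refine ContinuousOn.union_of_isClosed ?_ ?_ isClosed_Icc isClosed_Icc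
  · exact (by fun_prop : Continuous fun t => ε * exp (-(δ * t))).continuousOn.congr hb₁
  · exact (by fun_prop : Continuous fun t =>
      ε * exp (-(δ * R)) * (sin (l * (η + R - t)) / sin (l * η))).continuousOn.congr hb₂

theorem warping_nonneg (hε : 0 ≤ ε) (hl : 0 < l) (hlη : l * η = arctan (l / δ))
    (hb₁ : EqOn b (fun t => ε * exp (-(δ * t))) (Icc 0 R))
    (hb₂ : EqOn b (fun t => ε * exp (-(δ * R)) * (sin (l * (η + R - t)) / sin (l * η)))
      (Icc R (R + η))) :
    ∀ t ∈ Icc 0 (R + η), 0 ≤ b t := by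
  intro t ht
  rcases le_total t R with htR | htR
  · rw [hb₁ ⟨ht.1, htR⟩]
    positivity
  · have hlη_lt : l * η < π := by linarith [arctan_lt_pi_div_two (l / δ), pi_pos]
    rw [hb₂ ⟨htR, ht.2⟩]
    refine mul_nonneg (by positivity) (div_nonneg ?_ ?_) <;>
      refine sin_nonneg_of_nonneg_of_le_pi ?_ ?_ <;> nlinarith [ht.2]

theorem warping_hasDerivWithinAt_le (hε : 0 ≤ ε) (hδ : 0 < δ) (hl : 0 < l)
    (hlη : l * η = arctan (l / δ))
    (hb₁ : EqOn b (fun t => ε * exp (-(δ * t))) (Icc 0 R))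
    (hb₂ : EqOn b (fun t => ε * exp (-(δ * R)) * (sin (l * (η + R - t)) / sin (l * η)))
      (Icc R (R + η))) :
    ∀ t ∈ Ico 0 (R + η), ∃ d ≤ -δ * b t, HasDerivWithinAt b d (Ioi t) t := by
  intro t ht
  rcases lt_or_ge t R with htR | htR
  · refine ⟨-δ * b t, le_rfl, hasDerivWithinAt_Ioi_of_eqOn_Icc hb₁ ⟨ht.1, htR⟩ ?_⟩
    refine (((hasDerivAt_id' t).const_mul δ).neg.exp.const_mul ε).congr_deriv ?_
    rw [hb₁ ⟨ht.1, htR.le⟩, Pi.neg_apply]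
    ring
  · set s := l * (η + R - t)
    have hs₀ : 0 ≤ s := by nlinarith [ht.2]
    have hs : s ≤ arctan (l / δ) := by nlinarith
    have hsin : 0 < sin (l * η) := by
      rw [hlη]
      exact sin_pos_of_pos_of_lt_pi (arctan_pos.2 (by positivity))
        (by linarith [arctan_lt_pi_div_two (l / δ), pi_pos])
    refine ⟨-(ε * exp (-(δ * R)) / sin (l * η) * (l * cos s)), ?_,
      hasDerivWithinAt_Ioi_of_eqOn_Icc hb₂ ⟨htR, ht.2⟩ ?_⟩
    · rw [hb₂ ⟨htR, ht.2.le⟩]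
      have := mul_sin_le_mul_cos_of_le_arctan hδ hs₀ hs
      have hK : 0 ≤ ε * exp (-(δ * R)) / sin (l * η) := by positivity
      calc -(ε * exp (-(δ * R)) / sin (l * η) * (l * cos s))
          ≤ -(ε * exp (-(δ * R)) / sin (l * η) * (δ * sin s)) := by gcongr
        _ = -δ * (ε * exp (-(δ * R)) * (sin s / sin (l * η))) := by ring
    · exact ((((hasDerivAt_id' t).const_sub (η + R)).const_mul l).sin.div_const _).const_mul
        _ |>.congr_deriv (by ring)

end Warping

theorem stmt_15_general (n : ℕ) (hn : 2 ≤ n) (δ ε R : ℝ) (hδ0 : 0 < δ)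
    (hε : 0 < ε) (hεn : ε ≤ 1 / (n * δ)) (hR : 0 < R)
    (l η : ℝ)
    (hl : l = Real.exp (δ * R) / ε * Real.sqrt (1 - ε ^ 2 * δ ^ 2 * Real.exp (-(2 * δ * R))))
    (hη : η = 1 / l * Real.arctan (l / δ))
    (b : ℝ → ℝ)
    (hb1 : ∀ t ∈ Set.Icc (0:ℝ) R, b t = ε * Real.exp (-(δ * t)))
    (hb2 : ∀ t ∈ Set.Icc R (R + η),
      b t = ε * Real.exp (-(δ * R)) * (Real.sin (l * (η + R - t)) / Real.sin (l * η))) :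
    ∀ r ∈ Set.Ico (0:ℝ) (R + η),
      (n - 1 : ℝ) * δ * ∫ t in r..(R + η), b t ^ (n - 1) ≤ b r ^ (n - 1) := by
  have hεδ : ε * δ < 1 := by
    have hεnδ : ε * (n * δ) ≤ 1 := (le_div_iff₀ (by positivity)).1 hεn
    have hn' : (2 : ℝ) ≤ n := by exact_mod_cast hn
    nlinarith [mul_pos hε hδ0]
  have hl0 : 0 < l := hl ▸ exp_div_mul_sqrt_one_sub_pos hε hδ0 hR.le hεδ
  have hlη : l * η = arctan (l / δ) := by
    rw [hη]
    field_simp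
  have hη0 : 0 ≤ η := by
    rw [hη]
    exact mul_nonneg (by positivity) (arctan_nonneg.2 (by positivity))
  rintro r ⟨hr₀, hr⟩
  have hbound := mul_integral_pow_le_sub_pow_of_hasDerivWithinAt_le (n - 1) hr.le
    ((warping_continuousOn hR.le hη0 hb1 hb2).mono (Icc_subset_Icc_left hr₀))
    (fun t ht => warping_nonneg hε.le hl0 hlη hb1 hb2 t ⟨hr₀.trans ht.1.le, ht.2.le⟩)
    (fun t ht => warping_hasDerivWithinAt_le hε.le hδ0 hl0 hlη hb1 hb2 t ⟨hr₀.trans ht.1.le, ht.2⟩)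
  have hend : 0 ≤ b (R + η) ^ (n - 1) :=
    pow_nonneg (warping_nonneg hε.le hl0 hlη hb1 hb2 _ ⟨by linarith, le_rfl⟩) _
  rw [← Nat.cast_pred (by omega)]
  linarith

/-- Inequality (13) of the paper: for the warping function `b` of the model space of
revolution, every radial domain satisfies the isoperimetric-type bound
`b(r)^{n−1} ≥ (n−1)·δ·∫_r^{R+η} b(t)^{n−1} dt`. -/
theorem stmt_15 (n : ℕ) (hn : 2 ≤ n) (δ ε R : ℝ) (hδ : δ > 1 / n) (hδ0 : 0 < δ)
    (hε : 0 < ε) (hεn : ε ≤ 1 / (n * δ)) (hR : 0 < R)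
    (l η : ℝ)
    (hl : l = Real.exp (δ * R) / ε * Real.sqrt (1 - ε ^ 2 * δ ^ 2 * Real.exp (-(2 * δ * R))))
    (hη : η = 1 / l * Real.arctan (l / δ))
    (b : ℝ → ℝ)
    (hb1 : ∀ t ∈ Set.Icc (0:ℝ) R, b t = ε * Real.exp (-(δ * t)))
    (hb2 : ∀ t ∈ Set.Icc R (R + η),
      b t = ε * Real.exp (-(δ * R)) * (Real.sin (l * (η + R - t)) / Real.sin (l * η))) :
    ∀ r ∈ Set.Ico (0:ℝ) (R + η),
      (n - 1 : ℝ) * δ * ∫ t in r..(R + η), b t ^ (n - 1) ≤ b r ^ (n - 1) :=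
  stmt_15_general n hn δ ε R hδ0 hε hεn hR l η hl hη b hb1 hb2
end

section
/- Let c > 0, let 0 ≤ r ≤ R ≤ T be reals, and let w : [0, T] → ℝ be an integrable function such that w(t) = e^{−ct} for all t ∈ [0, R] and 0 ≤ w(t) ≤ e^{−ct} for all t ∈ [0, T]. Define u : [r, T] → ℝ by u(t) = min(t − r, R − r)/c. Then ∫_r^T u(t)·w(t) dt ≥ (1/c²)·(1 − (1 + c(R−r))·e^{−c(R−r)}) · ∫_r^T w(t) dt. -/
/-! Split both integrals at `R`. On `[R, T]` the function `u` is the constant `(R - r) / c`,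
which dominates the constant `k = (1 - (1 + x) e^{-x}) / c²`, `x = c (R - r)`, because
`1 - (1 + x) e^{-x} ≤ x`; as `w ≥ 0` this gives the bound there. On `[r, R]` the weight is exactly
`e^{-ct}`, and integrating explicitly gives `∫ u w - k ∫ w = k e^{-cR} / c ≥ 0`. -/

open Real MeasureTheory intervalIntegral

lemma one_add_mul_exp_neg_le_one (x : ℝ) : (1 + x) * exp (-x) ≤ 1 :=
  calc (1 + x) * exp (-x) ≤ exp x * exp (-x) := by gcongr; linarith [add_one_le_exp x]
    _ = 1 := by rw [← exp_add, add_neg_cancel, exp_zero]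

lemma one_sub_one_add_mul_exp_neg_le {x : ℝ} (hx : 0 ≤ x) : 1 - (1 + x) * exp (-x) ≤ x := by
  have : 0 ≤ x * exp (-x) := by positivity
  linarith [add_one_le_exp (-x)]

lemma hasDerivAt_exp_neg_mul (c t : ℝ) :
    HasDerivAt (fun t ↦ exp (-(c * t))) (-c * exp (-(c * t))) t := by
  simpa [mul_comm] using ((hasDerivAt_id t).const_mul c).neg.exp

lemma integral_exp_neg_mul {c : ℝ} (hc : c ≠ 0) (a b : ℝ) :
    ∫ t in a..b, exp (-(c * t)) = (exp (-(c * a)) - exp (-(c * b))) / c := by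
  have hderiv (t : ℝ) : HasDerivAt (fun t ↦ -exp (-(c * t)) / c) (exp (-(c * t))) t :=
    ((hasDerivAt_exp_neg_mul c t).neg.div_const c).congr_deriv (by field_simp)
  rw [integral_eq_sub_of_hasDerivAt (fun t _ ↦ hderiv t)
    (Continuous.intervalIntegrable (by fun_prop) _ _)]
  ring

lemma integral_sub_mul_exp_neg_mul {c : ℝ} (hc : c ≠ 0) (a b : ℝ) :
    ∫ t in a..b, (t - a) * exp (-(c * t))
      = (exp (-(c * a)) - (1 + c * (b - a)) * exp (-(c * b))) / c ^ 2 := by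
  have hderiv (t : ℝ) : HasDerivAt (fun t ↦ -(1 + c * (t - a)) * exp (-(c * t)) / c ^ 2)
      ((t - a) * exp (-(c * t))) t := by
    have hlin : HasDerivAt (fun t ↦ -(1 + c * (t - a))) (-c) t :=
      ((((hasDerivAt_id t).sub_const a).const_mul c).const_add 1).neg.congr_deriv (by ring)
    exact ((hlin.mul (hasDerivAt_exp_neg_mul c t)).div_const (c ^ 2)).congr_deriv
      (by field_simp; ring)
  rw [integral_eq_sub_of_hasDerivAt (fun t _ ↦ hderiv t)
    (Continuous.intervalIntegrable (by fun_prop) _ _)]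
  field_simp
  ring

lemma mul_integral_le_integral_mul_of_eqOn_exp {c r R : ℝ} {f w : ℝ → ℝ} (hc : 0 < c)
    (hrR : r ≤ R) (hf : ∀ t ∈ Set.Icc r R, f t = (t - r) / c)
    (hw : ∀ t ∈ Set.Icc r R, w t = exp (-(c * t))) :
    (1 / c ^ 2) * (1 - (1 + c * (R - r)) * exp (-(c * (R - r)))) * ∫ t in r..R, w t
      ≤ ∫ t in r..R, f t * w t := by
  have hfw : Set.EqOn (fun t ↦ f t * w t) (fun t ↦ (t - r) * exp (-(c * t)) / c)
      (Set.uIcc r R) := fun t ht ↦ by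
    rw [Set.uIcc_of_le hrR] at ht
    simp only [hf t ht, hw t ht, div_mul_eq_mul_div]
  rw [integral_congr hfw, integral_congr (g := fun t ↦ exp (-(c * t))) fun t ht ↦ hw t
    (Set.uIcc_of_le hrR ▸ ht), intervalIntegral.integral_div,
    integral_exp_neg_mul hc.ne', integral_sub_mul_exp_neg_mul hc.ne']
  have hsplit : exp (-(c * R)) = exp (-(c * r)) * exp (-(c * (R - r))) := by
    rw [← exp_add]; ring_nf
  set P := exp (-(c * r))
  set E := exp (-(c * (R - r)))
  set k := 1 - (1 + c * (R - r)) * E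
  have hk : 0 ≤ k := sub_nonneg.2 (one_add_mul_exp_neg_le_one _)
  have hgap : (P - (1 + c * (R - r)) * exp (-(c * R))) / c ^ 2 / c
      - 1 / c ^ 2 * k * ((P - exp (-(c * R))) / c) = k * P * E / c ^ 3 := by
    rw [hsplit]; field_simp; ring
  have : 0 ≤ k * P * E / c ^ 3 := by positivity
  linarith

lemma mul_integral_le_integral_mul_of_eqOn {a b R T : ℝ} {f w : ℝ → ℝ} (hab : a ≤ b)
    (hRT : R ≤ T) (hf : ∀ t ∈ Set.Icc R T, f t = b) (hw : ∀ t ∈ Set.Icc R T, 0 ≤ w t) :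
    a * ∫ t in R..T, w t ≤ ∫ t in R..T, f t * w t := by
  have hfw : Set.EqOn (fun t ↦ f t * w t) (fun t ↦ b * w t) (Set.uIcc R T) := fun t ht ↦ by
    rw [Set.uIcc_of_le hRT] at ht
    simp only [hf t ht]
  rw [integral_congr hfw, intervalIntegral.integral_const_mul]
  exact mul_le_mul_of_nonneg_right hab (integral_nonneg hRT hw)

/-- One-dimensional content of inequality (18) of the paper: if `w = e^{−ct}` on `[0,R]`
and `0 ≤ w ≤ e^{−ct}` on `[0,T]`, then for `u(t) = min(t−r, R−r)/c`,
`∫_r^T u·w ≥ (1/c²)(1 − (1 + c(R−r))e^{−c(R−r)})·∫_r^T w`. -/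
theorem stmt_18 (c : ℝ) (hc : 0 < c) (r R T : ℝ) (hr : 0 ≤ r) (hrR : r ≤ R) (hRT : R ≤ T)
    (w : ℝ → ℝ) (hint : IntervalIntegrable w MeasureTheory.volume 0 T)
    (hw1 : ∀ t ∈ Set.Icc (0:ℝ) R, w t = Real.exp (-(c * t)))
    (hw2 : ∀ t ∈ Set.Icc (0:ℝ) T, 0 ≤ w t ∧ w t ≤ Real.exp (-(c * t)))
    (u : ℝ → ℝ) (hu : ∀ t, u t = min (t - r) (R - r) / c) :
    (1 / c ^ 2) * (1 - (1 + c * (R - r)) * Real.exp (-(c * (R - r)))) * (∫ t in r..T, w t)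
      ≤ ∫ t in r..T, u t * w t := by
  have h0R : 0 ≤ R := hr.trans hrR
  have hwr : IntervalIntegrable w volume r R := hint.mono_set <| Set.uIcc_subset_uIcc
    (Set.mem_uIcc_of_le hr (hrR.trans hRT)) (Set.mem_uIcc_of_le h0R hRT)
  have hwR : IntervalIntegrable w volume R T := hint.mono_set <| Set.uIcc_subset_uIcc
    (Set.mem_uIcc_of_le h0R hRT) (Set.mem_uIcc_of_le (h0R.trans hRT) le_rfl)
  have hu_cont : Continuous u := by rw [funext hu]; fun_prop
  have head := mul_integral_le_integral_mul_of_eqOn_exp (f := u) hc hrR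
    (fun t ht ↦ by rw [hu, min_eq_left (sub_le_sub_right ht.2 r)])
    (fun t ht ↦ hw1 t ⟨hr.trans ht.1, ht.2⟩)
  have hk : (1 / c ^ 2) * (1 - (1 + c * (R - r)) * exp (-(c * (R - r)))) ≤ (R - r) / c :=
    calc _ ≤ 1 / c ^ 2 * (c * (R - r)) := mul_le_mul_of_nonneg_left
          (one_sub_one_add_mul_exp_neg_le (by nlinarith)) (by positivity)
      _ = (R - r) / c := by field_simp
  have tail := mul_integral_le_integral_mul_of_eqOn (f := u) hk hRT
    (fun t ht ↦ by rw [hu, min_eq_right (sub_le_sub_right ht.1 r)])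
    (fun t ht ↦ (hw2 t ⟨h0R.trans ht.1, ht.2⟩).1)
  rw [← integral_add_adjacent_intervals hwr hwR,
    ← integral_add_adjacent_intervals (hwr.continuousOn_mul hu_cont.continuousOn)
      (hwR.continuousOn_mul hu_cont.continuousOn), mul_add]
  exact add_le_add head tail
end
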